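/- Lemma (relative Faber-Krahn functions of quasi-isometric graphs): Let (Γ, d, π, μ) and (Γ̂, d̂, π̂, μ̂) be connected, countably infinite weighted graphs with controlled and uniformly lazy weights, and suppose Φ : Γ → Γ̂ is a quasi-isometry with constants ε, a, b, C_q. Fix a choice of quasi-inverse Φ⁻¹ : Γ̂ → Γ, meaning that for each z ∈ Γ̂, Φ⁻¹(z) is a point β ∈ Γ with d̂(Φ(β), z) ≤ ε. Then there exist constants c₁, c₂, c₃ > 0, depending only on the quasi-isometry constants and the weight constants, such that whenever Λ(B, ν) is a relative Faber-Krahn function of Γ, the function Λ̂(B̂(z, r), ν) := c₁ Λ(B(Φ⁻¹(z), c₂ r), c₃ ν) is a relative Faber-Krahn function of Γ̂. -/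

import Mathlib

/-!
Pull a test function `f` on `Γ₂` back to `g = f ∘ Φ` on `Γ₁`. Controlled weights make the
measure comparable along paths of bounded length and bound the size of balls of fixed radius,
so Cauchy–Schwarz along short geodesics gives `E₁(g) ≲ E₂(f)` and
`‖f‖₂² ≲ ‖g‖₁² + E₂(f)`. If the energy term dominates, the Rayleigh quotient of `f` is bounded
below by a constant, while a relative Faber–Krahn function never exceeds `sup λ₁ ≤ 2`.
Otherwise `‖f‖₂² ≲ ‖g‖₁²`, and `g` is supported in `Φ⁻¹(Ω)`, a set of comparable volume in a
comparable ball around `Φ⁻¹ z`, so the Faber–Krahn inequality for `g` transfers to `f`.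
-/

open scoped BigOperators

/-- Sum of a real-valued function over a set of vertices. -/
noncomputable def setSum {V : Type*} (A : Set V) (f : V → ℝ) : ℝ := ∑' y : A, f (y : V)

open Classical in
/-- The Markov kernel attached to vertex weights `pw` and edge weights `ew`. -/
noncomputable def mkernel {V : Type*} (pw : V → ℝ) (ew : V → V → ℝ) (x y : V) : ℝ :=
  if x = y then 1 - (∑' z, ew x z) / pw x else ew x y / pw x

open Classical in
/-- Iterates (convolution powers) of the Markov kernel. -/
noncomputable def mkernelPow {V : Type*} (pw : V → ℝ) (ew : V → V → ℝ) : ℕ → V → V → ℝ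
  | 0 => fun x y => if x = y then 1 else 0
  | n + 1 => fun x y => ∑' z, mkernel pw ew x z * mkernelPow pw ew n z y

/-- The heat kernel (transition density) of the random walk. -/
noncomputable def mheat {V : Type*} (pw : V → ℝ) (ew : V → V → ℝ) (n : ℕ) (x y : V) : ℝ :=
  mkernelPow pw ew n x y / pw y

/-- A weighted graph: a simple connected graph with symmetric, adapted edge weights
subordinate to positive vertex weights. -/
structure WeightedGraph (V : Type*) where
  G : SimpleGraph V
  wV : V → ℝ
  wE : V → V → ℝ
  wV_pos : ∀ x, 0 < wV x
  wE_nonneg : ∀ x y, 0 ≤ wE x y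
  wE_symm : ∀ x y, wE x y = wE y x
  adapted : ∀ x y, 0 < wE x y ↔ G.Adj x y
  connected : G.Connected
  wE_summable : ∀ x, Summable fun y => wE x y
  subordinate : ∀ x, (∑' y, wE x y) ≤ wV x

namespace WeightedGraph

variable {V : Type*}

/-- Controlled weights with constant `Cc`. -/
def Controlled (Γ : WeightedGraph V) (Cc : ℝ) : Prop :=
  1 < Cc ∧ ∀ x y, Γ.G.Adj x y → Γ.wV x ≤ Cc * Γ.wE x y

/-- Uniformly lazy weights with constant `Ce`. -/
def UniformlyLazy (Γ : WeightedGraph V) (Ce : ℝ) : Prop :=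
  Ce ∈ Set.Ioo (0 : ℝ) 1 ∧ ∀ x, (∑' y, Γ.wE x y) ≤ (1 - Ce) * Γ.wV x

/-- Closed ball for the graph distance. -/
noncomputable def ball (Γ : WeightedGraph V) (x : V) (r : ℝ) : Set V :=
  {y | (Γ.G.dist x y : ℝ) ≤ r}

/-- Volume of a ball. -/
noncomputable def vol (Γ : WeightedGraph V) (x : V) (r : ℝ) : ℝ :=
  setSum (Γ.ball x r) Γ.wV

/-- Dirichlet energy of a function. -/
noncomputable def energy (Γ : WeightedGraph V) (f : V → ℝ) : ℝ :=
  (∑' x, ∑' y, (f x - f y) ^ 2 * Γ.wE x y) / 2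

/-- Squared `L²`-norm of a function. -/
noncomputable def sqnorm (Γ : WeightedGraph V) (f : V → ℝ) : ℝ :=
  ∑' x, f x ^ 2 * Γ.wV x

/-- The first Dirichlet eigenvalue of a finite set `Ω`. -/
noncomputable def lambda1 (Γ : WeightedGraph V) (Ω : Finset V) : ℝ :=
  sInf {q | ∃ f : V → ℝ, f ≠ 0 ∧ (∀ x, f x ≠ 0 → x ∈ Ω) ∧ q = Γ.energy f / Γ.sqnorm f}

/-- `Λ` is a relative Faber-Krahn function of `Γ`: for balls `B(z,r)` the map
`ν ↦ Λ z r ν` is non-increasing, and `λ₁(Ω) ≥ Λ(B, π(Ω))` for nonempty finite `Ω ⊆ B`. -/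
def IsRelFK (Γ : WeightedGraph V) (Λ : V → ℝ → ℝ → ℝ) : Prop :=
  (∀ z r ν₁ ν₂, 0 < ν₁ → ν₁ ≤ ν₂ → Λ z r ν₂ ≤ Λ z r ν₁) ∧
  ∀ z : V, ∀ r : ℝ, ∀ Ω : Finset V, Ω.Nonempty → (∀ x ∈ Ω, x ∈ Γ.ball z r) →
    Λ z r (∑ x ∈ Ω, Γ.wV x) ≤ Γ.lambda1 Ω

/-- The heat kernel of the weighted graph. -/
noncomputable def heatKernel (Γ : WeightedGraph V) : ℕ → V → V → ℝ :=
  mheat Γ.wV Γ.wE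

/-- `ε`-average of a function over closed balls of radius `ε`. -/
noncomputable def avg (Γ : WeightedGraph V) (ε : ℝ) (f : V → ℝ) (x : V) : ℝ :=
  setSum (Γ.ball x ε) (fun y => f y * Γ.wV y) / Γ.vol x ε

/-- `Φ` is a quasi-isometry between weighted graphs with constants `ε, a, b, Cq`. -/
structure IsQI {V₁ V₂ : Type*} (Γ₁ : WeightedGraph V₁) (Γ₂ : WeightedGraph V₂)
    (Φ : V₁ → V₂) (ε a b Cq : ℝ) : Prop where
  eps_pos : 0 < ε
  a_pos : 0 < a
  b_nonneg : 0 ≤ b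
  Cq_pos : 0 < Cq
  dense : ∀ z : V₂, ∃ x : V₁, (Γ₂.G.dist (Φ x) z : ℝ) ≤ ε
  dist_lower : ∀ x y : V₁, a⁻¹ * (Γ₁.G.dist x y : ℝ) - b ≤ (Γ₂.G.dist (Φ x) (Φ y) : ℝ)
  dist_upper : ∀ x y : V₁, (Γ₂.G.dist (Φ x) (Φ y) : ℝ) ≤ a * (Γ₁.G.dist x y : ℝ)
  weight_lower : ∀ x, Cq⁻¹ * Γ₁.wV x ≤ Γ₂.wV (Φ x)
  weight_upper : ∀ x, Γ₂.wV (Φ x) ≤ Cq * Γ₁.wV x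

end WeightedGraph

open Finset

namespace SimpleGraph.Walk

variable {V : Type*} {G : SimpleGraph V}

lemma sub_eq_sum_darts (f : V → ℝ) {u v : V} (p : G.Walk u v) :
    f u - f v = (p.darts.map fun d => f d.fst - f d.snd).sum := by
  induction p with
  | nil => simp
  | cons _ _ ih => rw [darts_cons, List.map_cons, List.sum_cons, ← ih]; ring

lemma IsPath.sq_sub_le_length_mul_sum [DecidableEq V] (f : V → ℝ) {u v : V} {p : G.Walk u v}
    (hp : p.IsPath) :
    (f u - f v) ^ 2 ≤ p.length * ∑ d ∈ p.darts.toFinset, (f d.fst - f d.snd) ^ 2 := by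
  have hnodup := darts_nodup_of_support_nodup hp.support_nodup
  rw [p.sub_eq_sum_darts f, ← List.sum_toFinset _ hnodup, ← length_darts,
    ← List.toFinset_card_of_nodup hnodup]
  exact sq_sum_le_card_mul_sum_sq

lemma dist_le_length_of_mem_support [DecidableEq V] {u v w : V} (p : G.Walk u v)
    (h : w ∈ p.support) : G.dist u w ≤ p.length :=
  (dist_le (p.takeUntil w h)).trans (p.length_takeUntil_le_length h)

end SimpleGraph.Walk

lemma Finset.sum_comp_le_mul_sum {ι κ : Type*} [DecidableEq κ] {s : Finset ι} {t : Finset κ}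
    {g : ι → κ} (hg : ∀ i ∈ s, g i ∈ t) {h : κ → ℝ} (hh : ∀ k ∈ t, 0 ≤ h k) {N : ℕ}
    (hN : ∀ k ∈ t, #{i ∈ s | g i = k} ≤ N) :
    ∑ i ∈ s, h (g i) ≤ N * ∑ k ∈ t, h k := by
  have himage : s.image g ⊆ t := image_subset_iff.2 hg
  rw [sum_comp, mul_sum]
  calc ∑ k ∈ s.image g, #{i ∈ s | g i = k} • h k ≤ ∑ k ∈ s.image g, N * h k :=
        sum_le_sum fun k hk => by
          rw [nsmul_eq_mul]
          exact mul_le_mul_of_nonneg_right (by exact_mod_cast hN k (himage hk)) (hh k (himage hk))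
    _ ≤ ∑ k ∈ t, N * h k :=
        sum_le_sum_of_subset_of_nonneg himage fun k hk _ => mul_nonneg (Nat.cast_nonneg _) (hh k hk)

namespace WeightedGraph

variable {V : Type*} {Γ : WeightedGraph V} {Cc : ℝ} {f : V → ℝ} {S Ω : Finset V}

lemma wE_eq_zero_of_not_adj {x y : V} (h : ¬ Γ.G.Adj x y) : Γ.wE x y = 0 :=
  ((Γ.wE_nonneg x y).lt_or_eq.resolve_left fun hpos => h ((Γ.adapted x y).1 hpos)).symm

lemma sum_wE_le_wV (x : V) (T : Finset V) : ∑ y ∈ T, Γ.wE x y ≤ Γ.wV x :=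
  ((Γ.wE_summable x).sum_le_tsum T fun y _ => Γ.wE_nonneg x y).trans (Γ.subordinate x)

lemma wE_le_wV (x y : V) : Γ.wE x y ≤ Γ.wV x := by
  simpa using Γ.sum_wE_le_wV x {y}

lemma exists_adj [Nontrivial V] (Γ : WeightedGraph V) (z : V) : ∃ y, Γ.G.Adj z y := by
  obtain ⟨w, hw⟩ := exists_ne z
  obtain ⟨p⟩ := Γ.connected z w
  cases p with
  | nil => exact absurd rfl hw
  | cons h _ => exact ⟨_, h⟩

lemma eq_of_mem_ball_of_lt_one {z y : V} {r : ℝ} (hy : y ∈ Γ.ball z r) (hr : r < 1) : y = z := by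
  have : Γ.G.dist z y < 1 := by exact_mod_cast (show (Γ.G.dist z y : ℝ) ≤ r from hy).trans_lt hr
  exact (Γ.connected.dist_eq_zero_iff.1 (by omega)).symm

namespace Controlled

lemma pos (hc : Γ.Controlled Cc) : 0 < Cc := one_pos.trans hc.1

lemma wV_le_mul_wV_of_adj (hc : Γ.Controlled Cc) {x y : V} (h : Γ.G.Adj x y) :
    Γ.wV x ≤ Cc * Γ.wV y :=
  (hc.2 x y h).trans <|
    mul_le_mul_of_nonneg_left ((Γ.wE_symm x y).le.trans (wE_le_wV y x)) hc.pos.le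

lemma wV_le_pow_length_mul_wV (hc : Γ.Controlled Cc) {x y : V} (p : Γ.G.Walk x y) :
    Γ.wV x ≤ Cc ^ p.length * Γ.wV y := by
  induction p with
  | nil => simp
  | cons hxy _ ih =>
    rw [SimpleGraph.Walk.length_cons, pow_succ', mul_assoc]
    exact (hc.wV_le_mul_wV_of_adj hxy).trans (mul_le_mul_of_nonneg_left ih hc.pos.le)

lemma wV_le_pow_mul_wV (hc : Γ.Controlled Cc) {x y : V} {k : ℕ} (h : Γ.G.dist x y ≤ k) :
    Γ.wV x ≤ Cc ^ k * Γ.wV y := by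
  obtain ⟨p, hp⟩ := Γ.connected.exists_walk_length_eq_dist x y
  exact (hc.wV_le_pow_length_mul_wV p).trans <|
    mul_le_mul_of_nonneg_right (pow_le_pow_right₀ hc.1.le (hp ▸ h)) (Γ.wV_pos y).le

lemma card_le_of_forall_adj (hc : Γ.Controlled Cc) {x : V} {F : Finset V}
    (hF : ∀ y ∈ F, Γ.G.Adj x y) : #F ≤ ⌈Cc⌉₊ := by
  have hmul : (#F : ℝ) * Γ.wV x ≤ Cc * Γ.wV x :=
    calc (#F : ℝ) * Γ.wV x = ∑ _y ∈ F, Γ.wV x := by rw [sum_const, nsmul_eq_mul]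
      _ ≤ ∑ y ∈ F, Cc * Γ.wE x y := sum_le_sum fun y hy => hc.2 x y (hF y hy)
      _ ≤ Cc * Γ.wV x := by
        rw [← mul_sum]; exact mul_le_mul_of_nonneg_left (Γ.sum_wE_le_wV x F) hc.pos.le
  exact_mod_cast (le_of_mul_le_mul_right hmul (Γ.wV_pos x)).trans (Nat.le_ceil Cc)

lemma finite_neighborSet (hc : Γ.Controlled Cc) (x : V) : (Γ.G.neighborSet x).Finite := by
  by_contra h
  obtain ⟨F, hF, hcard⟩ := Set.Infinite.exists_subset_card_eq h (⌈Cc⌉₊ + 1)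
  have := hc.card_le_of_forall_adj fun y hy => hF hy
  omega

variable [DecidableEq V]

noncomputable def ballFinset (hc : Γ.Controlled Cc) : V → ℕ → Finset V
  | x, 0 => {x}
  | x, k + 1 => (insert x (hc.finite_neighborSet x).toFinset).biUnion fun y => hc.ballFinset y k

lemma mem_ballFinset (hc : Γ.Controlled Cc) {x y : V} {k : ℕ} :
    y ∈ hc.ballFinset x k ↔ Γ.G.dist x y ≤ k := by
  induction k generalizing x with
  | zero => simp [ballFinset, Γ.connected.dist_eq_zero_iff, eq_comm]
  | succ k ih =>
    simp only [ballFinset, mem_biUnion, mem_insert, Set.Finite.mem_toFinset,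
      SimpleGraph.mem_neighborSet, ih]
    constructor
    · rintro ⟨v, rfl | hv, hvy⟩
      · omega
      · have := SimpleGraph.dist_eq_one_iff_adj.2 hv
        have := Γ.connected.dist_triangle (u := x) (v := v) (w := y)
        omega
    · intro h
      obtain ⟨p, hp⟩ := Γ.connected.exists_walk_length_eq_dist x y
      cases p with
      | nil => exact ⟨_, .inl rfl, by simp⟩
      | cons hxv q =>
        refine ⟨_, .inr hxv, (SimpleGraph.dist_le q).trans ?_⟩
        rw [SimpleGraph.Walk.length_cons] at hp
        omega

lemma card_ballFinset_le (hc : Γ.Controlled Cc) (x : V) (k : ℕ) :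
    #(hc.ballFinset x k) ≤ (⌈Cc⌉₊ + 1) ^ k := by
  induction k generalizing x with
  | zero => simp [ballFinset]
  | succ k ih =>
    rw [ballFinset, pow_succ']
    refine (card_biUnion_le_card_mul _ _ _ fun y _ => ih y).trans (Nat.mul_le_mul_right _ ?_)
    exact (card_insert_le _ _).trans (Nat.add_le_add_right
      (hc.card_le_of_forall_adj fun y hy => (Set.Finite.mem_toFinset _).1 hy) 1)

end Controlled

lemma energy_nonneg (f : V → ℝ) : 0 ≤ Γ.energy f :=
  div_nonneg (tsum_nonneg fun x => tsum_nonneg fun y =>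
    mul_nonneg (sq_nonneg _) (Γ.wE_nonneg x y)) zero_le_two

lemma sqnorm_nonneg (f : V → ℝ) : 0 ≤ Γ.sqnorm f :=
  tsum_nonneg fun x => mul_nonneg (sq_nonneg _) (Γ.wV_pos x).le

@[simp]
lemma energy_zero : Γ.energy 0 = 0 := by simp [energy]

@[simp]
lemma sqnorm_zero : Γ.sqnorm 0 = 0 := by simp [sqnorm]

lemma sqnorm_eq_sum (hS : ∀ x, f x ≠ 0 → x ∈ S) : Γ.sqnorm f = ∑ x ∈ S, f x ^ 2 * Γ.wV x :=
  tsum_eq_sum fun x hx => by rw [not_imp_comm.1 (hS x) hx]; ring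

lemma sqnorm_pos (hf : f ≠ 0) (hS : ∀ x, f x ≠ 0 → x ∈ S) : 0 < Γ.sqnorm f := by
  obtain ⟨x, hx⟩ := Function.ne_iff.1 hf
  rw [sqnorm_eq_sum hS]
  exact sum_pos' (fun y _ => mul_nonneg (sq_nonneg _) (Γ.wV_pos y).le)
    ⟨x, hS x hx, mul_pos (pow_two_pos_of_ne_zero hx) (Γ.wV_pos x)⟩

lemma lambda1_le {g : V → ℝ} (hg : g ≠ 0) (hΩ : ∀ x, g x ≠ 0 → x ∈ Ω) :
    Γ.lambda1 Ω ≤ Γ.energy g / Γ.sqnorm g :=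
  csInf_le ⟨0, by rintro q ⟨f, -, -, rfl⟩; exact div_nonneg (energy_nonneg f) (sqnorm_nonneg f)⟩
    ⟨g, hg, hΩ, rfl⟩

lemma exists_ne_zero_of_nonempty (hΩ : Ω.Nonempty) :
    ∃ f : V → ℝ, f ≠ 0 ∧ ∀ x, f x ≠ 0 → x ∈ Ω := by
  classical
  obtain ⟨u, hu⟩ := hΩ
  refine ⟨Pi.single u 1, fun h => by simpa using congrFun h u, fun x hx => ?_⟩
  rw [Pi.single_apply, ite_ne_right_iff] at hx
  exact hx.1 ▸ hu

lemma le_lambda1 (hΩ : Ω.Nonempty) {c : ℝ}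
    (h : ∀ f : V → ℝ, f ≠ 0 → (∀ x, f x ≠ 0 → x ∈ Ω) → c ≤ Γ.energy f / Γ.sqnorm f) :
    c ≤ Γ.lambda1 Ω := by
  obtain ⟨g, hg, hgΩ⟩ := exists_ne_zero_of_nonempty hΩ
  exact le_csInf ⟨_, g, hg, hgΩ, rfl⟩ fun q ⟨f, hf, hfΩ, hq⟩ => hq ▸ h f hf hfΩ

section

variable [DecidableEq V]

lemma two_mul_energy_eq_sum (hc : Γ.Controlled Cc) (hS : ∀ x, f x ≠ 0 → x ∈ S) {T : Finset V}
    (hT : S.biUnion (hc.ballFinset · 1) ⊆ T) :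
    2 * Γ.energy f = ∑ x ∈ T, ∑ y ∈ T, (f x - f y) ^ 2 * Γ.wE x y := by
  have hvanish : ∀ x y, ¬ (x ∈ T ∧ y ∈ T) → (f x - f y) ^ 2 * Γ.wE x y = 0 := by
    refine fun x y hxy => by_contra fun hne => hxy ?_
    have hadj : Γ.G.Adj x y :=
      by_contra fun h => hne (by rw [wE_eq_zero_of_not_adj h, mul_zero])
    have hnear : ∀ u ∈ S, Γ.G.dist u x ≤ 1 → Γ.G.dist u y ≤ 1 → x ∈ T ∧ y ∈ T :=
      fun u hu hx hy => ⟨hT (mem_biUnion.2 ⟨u, hu, hc.mem_ballFinset.2 hx⟩),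
        hT (mem_biUnion.2 ⟨u, hu, hc.mem_ballFinset.2 hy⟩)⟩
    by_cases hx : f x = 0
    · have hy : f y ≠ 0 := fun hy => hne (by simp [hx, hy])
      exact hnear y (hS y hy) (SimpleGraph.dist_eq_one_iff_adj.2 hadj.symm).le (by simp)
    · exact hnear x (hS x hx) (by simp) (SimpleGraph.dist_eq_one_iff_adj.2 hadj).le
  have hrow : ∀ x, ∑' y, (f x - f y) ^ 2 * Γ.wE x y = ∑ y ∈ T, (f x - f y) ^ 2 * Γ.wE x y :=
    fun x => tsum_eq_sum fun y hy => hvanish x y fun h => hy h.2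
  calc 2 * Γ.energy f = ∑' x, ∑' y, (f x - f y) ^ 2 * Γ.wE x y := by rw [energy]; ring
    _ = _ := by
      rw [tsum_congr hrow]
      exact tsum_eq_sum fun x hx => sum_eq_zero fun y _ => hvanish x y fun h => hx h.1

lemma sum_le_two_mul_energy (hc : Γ.Controlled Cc) (hS : ∀ x, f x ≠ 0 → x ∈ S)
    (P : Finset (V × V)) : ∑ p ∈ P, (f p.1 - f p.2) ^ 2 * Γ.wE p.1 p.2 ≤ 2 * Γ.energy f := by
  set T := S.biUnion (hc.ballFinset · 1) ∪ (P.image Prod.fst ∪ P.image Prod.snd)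
  rw [two_mul_energy_eq_sum hc hS (T := T) subset_union_left,
    ← sum_product' (f := fun x y => (f x - f y) ^ 2 * Γ.wE x y)]
  refine sum_le_sum_of_subset_of_nonneg (fun p hp => mem_product.2 ⟨?_, ?_⟩)
    fun p _ _ => mul_nonneg (sq_nonneg _) (Γ.wE_nonneg _ _)
  · exact mem_union_right _ (mem_union_left _ (mem_image_of_mem _ hp))
  · exact mem_union_right _ (mem_union_right _ (mem_image_of_mem _ hp))

lemma energy_le_two_mul_sqnorm (hc : Γ.Controlled Cc) (hS : ∀ x, f x ≠ 0 → x ∈ S) :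
    Γ.energy f ≤ 2 * Γ.sqnorm f := by
  set T := S.biUnion (hc.ballFinset · 1)
  have hST : ∀ x, f x ≠ 0 → x ∈ T :=
    fun x hx => mem_biUnion.2 ⟨x, hS x hx, hc.mem_ballFinset.2 (by simp)⟩
  set D := ∑ x ∈ T, ∑ y ∈ T, f x ^ 2 * Γ.wE x y
  have hsplit : 2 * Γ.energy f ≤ 2 * D + 2 * ∑ x ∈ T, ∑ y ∈ T, f y ^ 2 * Γ.wE x y := by
    rw [two_mul_energy_eq_sum hc hS le_rfl, mul_sum, mul_sum, ← sum_add_distrib]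
    refine sum_le_sum fun x _ => ?_
    rw [mul_sum, mul_sum, ← sum_add_distrib]
    exact sum_le_sum fun y _ => by nlinarith [Γ.wE_nonneg x y, sq_nonneg (f x + f y)]
  have hsymm : ∑ x ∈ T, ∑ y ∈ T, f y ^ 2 * Γ.wE x y = D := by
    rw [sum_comm]
    exact sum_congr rfl fun x _ => sum_congr rfl fun y _ => by rw [Γ.wE_symm]
  have hD : D ≤ Γ.sqnorm f := by
    rw [sqnorm_eq_sum hST]
    exact sum_le_sum fun x _ => by
      rw [← mul_sum]; exact mul_le_mul_of_nonneg_left (Γ.sum_wE_le_wV x T) (sq_nonneg _)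
  linarith

lemma sq_mul_wE_le_energy (hc : Γ.Controlled Cc) (hS : ∀ x, f x ≠ 0 → x ∈ S) {x y : V}
    (hy : f y = 0) : f x ^ 2 * Γ.wE x y ≤ Γ.energy f := by
  rcases eq_or_ne x y with rfl | hxy
  · simpa [hy] using energy_nonneg f
  have := sum_le_two_mul_energy hc hS {(x, y), (y, x)}
  rw [sum_pair (by simp [hxy]), Γ.wE_symm y x, hy] at this
  linarith

lemma sqnorm_le_mul_energy [Nontrivial V] (hc : Γ.Controlled Cc) {z : V}
    (hz : ∀ x, f x ≠ 0 → x = z) : Γ.sqnorm f ≤ Cc * Γ.energy f := by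
  obtain ⟨y, hy⟩ := Γ.exists_adj z
  have hS : ∀ x, f x ≠ 0 → x ∈ ({z} : Finset V) := fun x hx => mem_singleton.2 (hz x hx)
  rw [sqnorm_eq_sum hS, sum_singleton]
  calc f z ^ 2 * Γ.wV z ≤ f z ^ 2 * (Cc * Γ.wE z y) :=
        mul_le_mul_of_nonneg_left (hc.2 z y hy) (sq_nonneg _)
    _ = Cc * (f z ^ 2 * Γ.wE z y) := by ring
    _ ≤ Cc * Γ.energy f := mul_le_mul_of_nonneg_left
        (sq_mul_wE_le_energy hc hS (not_imp_comm.1 (hz y) hy.ne')) hc.pos.le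

noncomputable def localEnergy (hc : Γ.Controlled Cc) (f : V → ℝ) (v : V) (k : ℕ) : ℝ :=
  ∑ p ∈ hc.ballFinset v k ×ˢ hc.ballFinset v k, (f p.1 - f p.2) ^ 2 * Γ.wE p.1 p.2

lemma sq_sub_mul_wV_le_localEnergy (hc : Γ.Controlled Cc) {u v : V} {k : ℕ}
    (h : Γ.G.dist u v ≤ k) (f : V → ℝ) :
    (f u - f v) ^ 2 * Γ.wV u ≤ k * Cc ^ (k + 1) * localEnergy hc f u k := by
  obtain ⟨p, hp⟩ := Γ.connected.exists_walk_length_eq_dist u v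
  set D := p.darts.toFinset
  set δ : Γ.G.Dart → ℝ := fun d => f d.fst - f d.snd
  have hnear : ∀ w ∈ p.support, Γ.G.dist u w ≤ k :=
    fun w hw => (p.dist_le_length_of_mem_support hw).trans (hp ▸ h)
  have hD : ∀ d ∈ D, d.fst ∈ hc.ballFinset u k ∧ d.snd ∈ hc.ballFinset u k := fun d hd =>
    have hd := List.mem_toFinset.1 hd
    ⟨hc.mem_ballFinset.2 (hnear _ (p.dart_fst_mem_support_of_mem_darts hd)),
      hc.mem_ballFinset.2 (hnear _ (p.dart_snd_mem_support_of_mem_darts hd))⟩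
  have hweight : ∀ d ∈ D, Γ.wV u ≤ Cc ^ (k + 1) * Γ.wE d.fst d.snd := fun d hd =>
    calc Γ.wV u ≤ Cc ^ k * Γ.wV d.fst :=
          hc.wV_le_pow_mul_wV (hc.mem_ballFinset.1 (hD d hd).1)
      _ ≤ Cc ^ k * (Cc * Γ.wE d.fst d.snd) :=
          mul_le_mul_of_nonneg_left (hc.2 _ _ d.adj) (pow_nonneg hc.pos.le k)
      _ = Cc ^ (k + 1) * Γ.wE d.fst d.snd := by ring
  have hD' : D.image SimpleGraph.Dart.toProd ⊆ hc.ballFinset u k ×ˢ hc.ballFinset u k := by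
    simpa [image_subset_iff] using fun d hd => hD d hd
  have hk : (p.length : ℝ) ≤ k := by exact_mod_cast hp ▸ h
  calc (f u - f v) ^ 2 * Γ.wV u ≤ (k * ∑ d ∈ D, δ d ^ 2) * Γ.wV u :=
        mul_le_mul_of_nonneg_right
          (((p.isPath_of_length_eq_dist hp).sq_sub_le_length_mul_sum f).trans
            (mul_le_mul_of_nonneg_right hk (sum_nonneg fun d _ => sq_nonneg _))) (Γ.wV_pos u).le
    _ = k * ∑ d ∈ D, δ d ^ 2 * Γ.wV u := by rw [mul_assoc, sum_mul]
    _ ≤ k * ∑ d ∈ D, Cc ^ (k + 1) * (δ d ^ 2 * Γ.wE d.fst d.snd) := by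
        refine mul_le_mul_of_nonneg_left (sum_le_sum fun d hd => ?_) (Nat.cast_nonneg k)
        rw [mul_left_comm]
        exact mul_le_mul_of_nonneg_left (hweight d hd) (sq_nonneg _)
    _ = k * Cc ^ (k + 1) * ∑ q ∈ D.image SimpleGraph.Dart.toProd,
          (f q.1 - f q.2) ^ 2 * Γ.wE q.1 q.2 := by
        rw [sum_image fun _ _ _ _ h => SimpleGraph.Dart.toProd_injective h, ← mul_sum, mul_assoc]
    _ ≤ k * Cc ^ (k + 1) * localEnergy hc f u k := by
        refine mul_le_mul_of_nonneg_left ?_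
          (mul_nonneg (Nat.cast_nonneg k) (pow_nonneg hc.pos.le _))
        exact sum_le_sum_of_subset_of_nonneg hD'
          fun q _ _ => mul_nonneg (sq_nonneg _) (Γ.wE_nonneg _ _)

lemma sum_localEnergy_le (hc : Γ.Controlled Cc) (hS : ∀ x, f x ≠ 0 → x ∈ S) {ι : Type*}
    (X : Finset ι) (c : ι → V) (k N : ℕ) (hN : ∀ v, #{i ∈ X | Γ.G.dist (c i) v ≤ k} ≤ N) :
    ∑ i ∈ X, localEnergy hc f (c i) k ≤ N * (2 * Γ.energy f) := by
  set B := fun i => hc.ballFinset (c i) k ×ˢ hc.ballFinset (c i) k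
  set t := fun p : V × V => (f p.1 - f p.2) ^ 2 * Γ.wE p.1 p.2
  have ht : ∀ p, 0 ≤ t p := fun p => mul_nonneg (sq_nonneg _) (Γ.wE_nonneg _ _)
  calc ∑ i ∈ X, localEnergy hc f (c i) k = ∑ p ∈ X.biUnion B, ∑ i ∈ X with p ∈ B i, t p :=
        sum_comm' fun i p => by simp only [mem_biUnion, mem_filter]; tauto
    _ ≤ ∑ p ∈ X.biUnion B, N * t p := sum_le_sum fun p _ => by
        rw [sum_const, nsmul_eq_mul]
        refine mul_le_mul_of_nonneg_right ?_ (ht p)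
        refine Nat.cast_le.2
          ((card_le_card (monotone_filter_right _ fun i _ hi => ?_)).trans (hN p.1))
        exact hc.mem_ballFinset.1 (mem_product.1 hi).1
    _ ≤ N * (2 * Γ.energy f) := by
        rw [← mul_sum]
        exact mul_le_mul_of_nonneg_left (sum_le_two_mul_energy hc hS _) (Nat.cast_nonneg _)

lemma sum_sq_sub_comp_mul_wV_le (hc : Γ.Controlled Cc) (hS : ∀ x, f x ≠ 0 → x ∈ S)
    (X : Finset V) {ψ : V → V} {k : ℕ} (hψ : ∀ w, Γ.G.dist w (ψ w) ≤ k) :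
    ∑ w ∈ X, (f w - f (ψ w)) ^ 2 * Γ.wV w ≤
      k * Cc ^ (k + 1) * (⌈Cc⌉₊ + 1) ^ k * (2 * Γ.energy f) := by
  have hmult : ∀ v, #{w ∈ X | Γ.G.dist w v ≤ k} ≤ (⌈Cc⌉₊ + 1) ^ k := fun v =>
    (card_le_card fun w hw =>
      hc.mem_ballFinset.2 (SimpleGraph.dist_comm ▸ (mem_filter.1 hw).2)).trans
        (hc.card_ballFinset_le v k)
  calc ∑ w ∈ X, (f w - f (ψ w)) ^ 2 * Γ.wV w
      ≤ ∑ w ∈ X, k * Cc ^ (k + 1) * localEnergy hc f w k :=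
        sum_le_sum fun w _ => sq_sub_mul_wV_le_localEnergy hc (hψ w) f
    _ ≤ k * Cc ^ (k + 1) * ((⌈Cc⌉₊ + 1) ^ k * (2 * Γ.energy f)) := by
        rw [← mul_sum]
        refine mul_le_mul_of_nonneg_left ?_
          (mul_nonneg (Nat.cast_nonneg k) (pow_nonneg hc.pos.le _))
        exact_mod_cast sum_localEnergy_le hc hS X id k _ hmult
    _ = _ := by ring

lemma two_mul_energy_le_sum (hc : Γ.Controlled Cc) (hS : ∀ x, f x ≠ 0 → x ∈ S) {B : V → ℝ}
    (hB₀ : ∀ x, 0 ≤ B x) (hB : ∀ x y, Γ.G.Adj x y → (f x - f y) ^ 2 * Γ.wV x ≤ B x) :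
    2 * Γ.energy f ≤ ∑ x ∈ S.biUnion (hc.ballFinset · 1), B x := by
  set T := S.biUnion (hc.ballFinset · 1)
  rw [two_mul_energy_eq_sum hc hS le_rfl]
  refine sum_le_sum fun x _ => ?_
  have hterm : ∀ y, (f x - f y) ^ 2 * Γ.wE x y ≤ B x / Γ.wV x * Γ.wE x y := fun y => by
    by_cases hxy : Γ.G.Adj x y
    · exact mul_le_mul_of_nonneg_right ((le_div_iff₀ (Γ.wV_pos x)).2 (hB x y hxy)) (Γ.wE_nonneg x y)
    · simp [wE_eq_zero_of_not_adj hxy]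
  calc ∑ y ∈ T, (f x - f y) ^ 2 * Γ.wE x y ≤ B x / Γ.wV x * ∑ y ∈ T, Γ.wE x y := by
        rw [mul_sum]; exact sum_le_sum fun y _ => hterm y
    _ ≤ B x / Γ.wV x * Γ.wV x :=
        mul_le_mul_of_nonneg_left (Γ.sum_wE_le_wV x T) (div_nonneg (hB₀ x) (Γ.wV_pos x).le)
    _ = B x := div_mul_cancel₀ _ (Γ.wV_pos x).ne'

end

lemma lambda1_le_two (hc : Γ.Controlled Cc) (hΩ : Ω.Nonempty) : Γ.lambda1 Ω ≤ 2 := by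
  classical
  obtain ⟨g, hg, hgΩ⟩ := exists_ne_zero_of_nonempty hΩ
  refine (lambda1_le hg hgΩ).trans ((div_le_iff₀ (sqnorm_pos hg hgΩ)).2 ?_)
  exact energy_le_two_mul_sqnorm hc hgΩ

namespace IsRelFK

variable {Λ : V → ℝ → ℝ → ℝ}

lemma le_two (hΛ : Γ.IsRelFK Λ) (hc : Γ.Controlled Cc) {z u : V} {R ν : ℝ}
    (hu : u ∈ Γ.ball z R) (hν : Γ.wV u ≤ ν) : Λ z R ν ≤ 2 := by
  classical
  calc Λ z R ν ≤ Λ z R (∑ x ∈ {u}, Γ.wV x) :=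
        hΛ.1 z R _ _ (by simpa using Γ.wV_pos u) (by simpa using hν)
    _ ≤ Γ.lambda1 {u} := hΛ.2 z R {u} (singleton_nonempty u) (by simpa using hu)
    _ ≤ 2 := lambda1_le_two hc (singleton_nonempty u)

lemma le_energy_div_sqnorm (hΛ : Γ.IsRelFK Λ) {z : V} {R ν : ℝ} {g : V → ℝ} {Ω : Finset V}
    (hg₀ : g ≠ 0) (hg : ∀ x, g x ≠ 0 → x ∈ Ω) (hΩ : ∀ x ∈ Ω, x ∈ Γ.ball z R)
    (hΩν : ∑ x ∈ Ω, Γ.wV x ≤ ν) : Λ z R ν ≤ Γ.energy g / Γ.sqnorm g := by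
  obtain ⟨x, hx⟩ := Function.ne_iff.1 hg₀
  have hΩne : Ω.Nonempty := ⟨x, hg x hx⟩
  calc Λ z R ν ≤ Λ z R (∑ x ∈ Ω, Γ.wV x) :=
        hΛ.1 z R _ _ (sum_pos (fun x _ => Γ.wV_pos x) hΩne) hΩν
    _ ≤ Γ.lambda1 Ω := hΛ.2 z R Ω hΩne hΩ
    _ ≤ Γ.energy g / Γ.sqnorm g := lambda1_le hg₀ hg

/-- The comparison principle behind the transfer of Faber–Krahn functions: `E / Q` is the
Rayleigh quotient of a test function on another graph, and `g` is its transplant to `Γ`. -/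
lemma mul_le_div_of_comparison (hΛ : Γ.IsRelFK Λ) (hc : Γ.Controlled Cc)
    {K₁ K₂ K₃ E Q : ℝ} (hK₁ : 0 < K₁) (hK₂ : 0 < K₂) (hK₃ : 0 < K₃) (hE : 0 ≤ E) (hQ : 0 < Q)
    {z u : V} {R ν : ℝ} (hu : u ∈ Γ.ball z R) (huν : Γ.wV u ≤ ν)
    (g : V → ℝ) (Ω : Finset V) (hg : ∀ x, g x ≠ 0 → x ∈ Ω) (hΩ : ∀ x ∈ Ω, x ∈ Γ.ball z R)
    (hΩν : ∑ x ∈ Ω, Γ.wV x ≤ ν) (hnorm : Q ≤ K₁ * Γ.sqnorm g + K₂ * E)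
    (henergy : Γ.energy g ≤ K₃ * E) :
    min (1 / (4 * K₂)) (1 / (2 * K₁ * K₃)) * Λ z R ν ≤ E / Q := by
  have hc₁ : 0 ≤ min (1 / (4 * K₂)) (1 / (2 * K₁ * K₃)) := le_min (by positivity) (by positivity)
  by_cases hsmall : Q ≤ 2 * K₂ * E
  · calc min (1 / (4 * K₂)) (1 / (2 * K₁ * K₃)) * Λ z R ν
        ≤ min (1 / (4 * K₂)) (1 / (2 * K₁ * K₃)) * 2 :=
          mul_le_mul_of_nonneg_left (hΛ.le_two hc hu huν) hc₁
      _ ≤ 1 / (4 * K₂) * 2 := mul_le_mul_of_nonneg_right (min_le_left _ _) zero_le_two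
      _ = 1 / (2 * K₂) := by field_simp; norm_num
      _ ≤ E / Q := by rw [div_le_div_iff₀ (by positivity) hQ]; linarith
  have hgQ : Q < 2 * K₁ * Γ.sqnorm g := by linarith
  have hg₀ : g ≠ 0 := by
    rintro rfl
    simp only [sqnorm_zero, mul_zero] at hgQ
    linarith
  have hΛg : Λ z R ν ≤ 2 * K₁ * K₃ * (E / Q) := by
    refine (hΛ.le_energy_div_sqnorm hg₀ hg hΩ hΩν).trans ?_
    rw [div_le_iff₀ (sqnorm_pos hg₀ hg)]
    calc Γ.energy g ≤ K₃ * E := henergy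
      _ = 2 * K₁ * K₃ * (E / Q) * (Q / (2 * K₁)) := by field_simp
      _ ≤ 2 * K₁ * K₃ * (E / Q) * Γ.sqnorm g := by
        gcongr
        rw [div_le_iff₀ (by positivity)]; linarith
  calc min (1 / (4 * K₂)) (1 / (2 * K₁ * K₃)) * Λ z R ν
      ≤ min (1 / (4 * K₂)) (1 / (2 * K₁ * K₃)) * (2 * K₁ * K₃ * (E / Q)) :=
        mul_le_mul_of_nonneg_left hΛg hc₁
    _ ≤ 1 / (2 * K₁ * K₃) * (2 * K₁ * K₃ * (E / Q)) :=
        mul_le_mul_of_nonneg_right (min_le_right _ _) (by positivity)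
    _ = E / Q := by field_simp

end IsRelFK

namespace IsQI

variable {V₁ V₂ : Type*} {Γ₁ : WeightedGraph V₁} {Γ₂ : WeightedGraph V₂} {Φ : V₁ → V₂}
  {ε a b Cq Cc₁ Cc₂ : ℝ} {Φinv : V₂ → V₁}

lemma wV_le (hΦ : IsQI Γ₁ Γ₂ Φ ε a b Cq) (x : V₁) : Γ₁.wV x ≤ Cq * Γ₂.wV (Φ x) :=
  (inv_mul_le_iff₀ hΦ.Cq_pos).1 (hΦ.weight_lower x)

lemma dist_le_of_dist_le (hΦ : IsQI Γ₁ Γ₂ Φ ε a b Cq) {x y : V₁} {R : ℝ}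
    (h : (Γ₂.G.dist (Φ x) (Φ y) : ℝ) ≤ R) : (Γ₁.G.dist x y : ℝ) ≤ a * (R + b) := by
  rw [← inv_mul_le_iff₀ hΦ.a_pos]
  linarith [hΦ.dist_lower x y]

lemma dist_inv_le (hΦ : IsQI Γ₁ Γ₂ Φ ε a b Cq)
    (hinv : ∀ z, (Γ₂.G.dist (Φ (Φinv z)) z : ℝ) ≤ ε) {z : V₂} {x : V₁} {r : ℝ} (hr : 1 ≤ r)
    (h : (Γ₂.G.dist z (Φ x) : ℝ) ≤ r + ε) :
    (Γ₁.G.dist (Φinv z) x : ℝ) ≤ a * (1 + 2 * ε + b) * r := by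
  have htri : (Γ₂.G.dist (Φ (Φinv z)) (Φ x) : ℝ) ≤ r + 2 * ε := by
    have : (Γ₂.G.dist (Φ (Φinv z)) (Φ x) : ℝ) ≤ Γ₂.G.dist (Φ (Φinv z)) z + Γ₂.G.dist z (Φ x) := by
      exact_mod_cast Γ₂.connected.dist_triangle
    linarith [hinv z]
  refine (hΦ.dist_le_of_dist_le htri).trans ?_
  have hεb : 0 ≤ 2 * ε + b := by linarith [hΦ.eps_pos, hΦ.b_nonneg]
  nlinarith [mul_nonneg (mul_nonneg hΦ.a_pos.le hεb) (sub_nonneg.2 hr)]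

lemma mem_ball_of_mem_ball (hΦ : IsQI Γ₁ Γ₂ Φ ε a b Cq)
    (hinv : ∀ z, (Γ₂.G.dist (Φ (Φinv z)) z : ℝ) ≤ ε) {z : V₂} {x : V₁} {r : ℝ} (hr : 1 ≤ r)
    (hx : Φ x ∈ Γ₂.ball z r) : x ∈ Γ₁.ball (Φinv z) (a * (1 + 2 * ε + b) * r) :=
  hΦ.dist_inv_le hinv hr (by linarith [show (Γ₂.G.dist z (Φ x) : ℝ) ≤ r from hx, hΦ.eps_pos])

lemma inv_mem_ball (hΦ : IsQI Γ₁ Γ₂ Φ ε a b Cq)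
    (hinv : ∀ z, (Γ₂.G.dist (Φ (Φinv z)) z : ℝ) ≤ ε) {z w : V₂} {r : ℝ} (hw : w ∈ Γ₂.ball z r) :
    Φinv w ∈ Γ₁.ball (Φinv z) (a * (1 + 2 * ε + b) * r) := by
  rcases lt_or_ge r 1 with hr | hr
  · obtain rfl := eq_of_mem_ball_of_lt_one hw hr
    have hr₀ : 0 ≤ r := (Nat.cast_nonneg _).trans hw
    have := hΦ.a_pos; have := hΦ.eps_pos; have := hΦ.b_nonneg
    show ((Γ₁.G.dist (Φinv w) (Φinv w) : ℕ) : ℝ) ≤ _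
    rw [SimpleGraph.dist_self, Nat.cast_zero]
    positivity
  · refine hΦ.dist_inv_le hinv hr ?_
    have : (Γ₂.G.dist z (Φ (Φinv w)) : ℝ) ≤ Γ₂.G.dist z w + Γ₂.G.dist w (Φ (Φinv w)) := by
      exact_mod_cast Γ₂.connected.dist_triangle
    rw [SimpleGraph.dist_comm (u := w)] at this
    linarith [show (Γ₂.G.dist z w : ℝ) ≤ r from hw, hinv w]

lemma card_le [DecidableEq V₁] (hΦ : IsQI Γ₁ Γ₂ Φ ε a b Cq) (h₁c : Γ₁.Controlled Cc₁)
    {S : Finset V₁} {v : V₂} {R : ℕ} (hS : ∀ x ∈ S, Γ₂.G.dist (Φ x) v ≤ R) :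
    #S ≤ (⌈Cc₁⌉₊ + 1) ^ ⌈a * (2 * R + b)⌉₊ := by
  obtain rfl | ⟨x₀, hx₀⟩ := S.eq_empty_or_nonempty
  · simp
  refine (card_le_card fun x hx => h₁c.mem_ballFinset.2 ?_).trans (h₁c.card_ballFinset_le x₀ _)
  have h₀ := hS x₀ hx₀
  have h₁ := hS x hx
  have htri := Γ₂.connected.dist_triangle (u := Φ x₀) (v := v) (w := Φ x)
  rw [SimpleGraph.dist_comm (u := v)] at htri
  have : (Γ₂.G.dist (Φ x₀) (Φ x) : ℝ) ≤ 2 * R := by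
    exact_mod_cast (by omega : Γ₂.G.dist (Φ x₀) (Φ x) ≤ 2 * R)
  exact_mod_cast (hΦ.dist_le_of_dist_le this).trans (Nat.le_ceil _)

lemma finite_preimage (hΦ : IsQI Γ₁ Γ₂ Φ ε a b Cq) (h₁c : Γ₁.Controlled Cc₁) {s : Set V₂}
    (hs : s.Finite) : (Φ ⁻¹' s).Finite := by
  classical
  refine hs.preimage' fun y _ => ?_
  obtain h | ⟨x₀, hx₀⟩ := (Φ ⁻¹' {y}).eq_empty_or_nonempty
  · simp [h]
  refine (h₁c.ballFinset x₀ ⌈a * b⌉₊).finite_toSet.subset fun x hx => h₁c.mem_ballFinset.2 ?_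
  have : (Γ₂.G.dist (Φ x₀) (Φ x) : ℝ) ≤ 0 := by simp_all
  have hdist := hΦ.dist_le_of_dist_le this
  rw [zero_add] at hdist
  exact_mod_cast hdist.trans (Nat.le_ceil _)

lemma sum_wV_le [DecidableEq V₁] [DecidableEq V₂] (hΦ : IsQI Γ₁ Γ₂ Φ ε a b Cq)
    (h₁c : Γ₁.Controlled Cc₁) {Ω' : Finset V₁} {Ω : Finset V₂} (h : ∀ x ∈ Ω', Φ x ∈ Ω) :
    ∑ x ∈ Ω', Γ₁.wV x ≤ Cq * (⌈Cc₁⌉₊ + 1) ^ ⌈a * b⌉₊ * ∑ y ∈ Ω, Γ₂.wV y := by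
  have hfiber : ∀ y ∈ Ω, #{x ∈ Ω' | Φ x = y} ≤ (⌈Cc₁⌉₊ + 1) ^ ⌈a * b⌉₊ := fun y _ => by
    simpa using hΦ.card_le h₁c (R := 0) (v := y) fun x hx => by simp [(mem_filter.1 hx).2]
  calc ∑ x ∈ Ω', Γ₁.wV x ≤ Cq * ∑ x ∈ Ω', Γ₂.wV (Φ x) := by
        rw [mul_sum]; exact sum_le_sum fun x _ => hΦ.wV_le x
    _ ≤ Cq * ((⌈Cc₁⌉₊ + 1) ^ ⌈a * b⌉₊ * ∑ y ∈ Ω, Γ₂.wV y) := by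
        refine mul_le_mul_of_nonneg_left ?_ hΦ.Cq_pos.le
        exact_mod_cast sum_comp_le_mul_sum h (fun y _ => (Γ₂.wV_pos y).le) hfiber
    _ = _ := by ring

lemma exists_wV_le (hΦ : IsQI Γ₁ Γ₂ Φ ε a b Cq) (h₁c : Γ₁.Controlled Cc₁)
    (h₂c : Γ₂.Controlled Cc₂) (hinv : ∀ z, (Γ₂.G.dist (Φ (Φinv z)) z : ℝ) ≤ ε) :
    ∃ C > 0, (∀ w, Γ₁.wV (Φinv w) ≤ C * Γ₂.wV w) ∧
      ∀ (Ω' : Finset V₁) (Ω : Finset V₂), (∀ x ∈ Ω', Φ x ∈ Ω) →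
        ∑ x ∈ Ω', Γ₁.wV x ≤ C * ∑ y ∈ Ω, Γ₂.wV y := by
  classical
  set M : ℝ := (⌈Cc₁⌉₊ + 1) ^ ⌈a * b⌉₊
  have hM : 1 ≤ M := one_le_pow₀ (by linarith [(Nat.cast_nonneg ⌈Cc₁⌉₊ : (0 : ℝ) ≤ _)])
  have hCc : 1 ≤ Cc₂ ^ ⌈ε⌉₊ := one_le_pow₀ h₂c.1.le
  have hCq := hΦ.Cq_pos
  refine ⟨Cq * Cc₂ ^ ⌈ε⌉₊ * M, by positivity, fun w => ?_, fun Ω' Ω h => ?_⟩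
  · have hdist : Γ₂.G.dist (Φ (Φinv w)) w ≤ ⌈ε⌉₊ := by exact_mod_cast (hinv w).trans (Nat.le_ceil ε)
    calc Γ₁.wV (Φinv w) ≤ Cq * Γ₂.wV (Φ (Φinv w)) := hΦ.wV_le _
      _ ≤ Cq * (Cc₂ ^ ⌈ε⌉₊ * Γ₂.wV w) :=
          mul_le_mul_of_nonneg_left (h₂c.wV_le_pow_mul_wV hdist) hCq.le
      _ ≤ Cq * Cc₂ ^ ⌈ε⌉₊ * M * Γ₂.wV w := by
          rw [← mul_assoc]
          exact mul_le_mul_of_nonneg_right (le_mul_of_one_le_right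
            (mul_nonneg hCq.le (zero_le_one.trans hCc)) hM) (Γ₂.wV_pos w).le
  · refine (hΦ.sum_wV_le h₁c h).trans (mul_le_mul_of_nonneg_right ?_
      (sum_nonneg fun y _ => (Γ₂.wV_pos y).le))
    exact mul_le_mul_of_nonneg_right (le_mul_of_one_le_right hCq.le hCc) (zero_le_one.trans hM)

lemma sum_sq_comp_inv_mul_wV_le (hΦ : IsQI Γ₁ Γ₂ Φ ε a b Cq) (h₂c : Γ₂.Controlled Cc₂)
    (hinv : ∀ z, (Γ₂.G.dist (Φ (Φinv z)) z : ℝ) ≤ ε) {g : V₁ → ℝ} {Ω' : Finset V₁}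
    (hg : ∀ x, g x ≠ 0 → x ∈ Ω') (Ω : Finset V₂) :
    ∑ w ∈ Ω, g (Φinv w) ^ 2 * Γ₂.wV w ≤
      Cq * Cc₂ ^ ⌈ε⌉₊ * ((⌈Cc₂⌉₊ + 1) ^ ⌈ε⌉₊ * Γ₁.sqnorm g) := by
  classical
  set e := ⌈ε⌉₊
  have hψ : ∀ w, Γ₂.G.dist (Φ (Φinv w)) w ≤ e := fun w => by
    exact_mod_cast (hinv w).trans (Nat.le_ceil ε)
  have hfiber : ∀ x ∈ Ω.image Φinv ∪ Ω', #{w ∈ Ω | Φinv w = x} ≤ (⌈Cc₂⌉₊ + 1) ^ e :=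
    fun x _ => (card_le_card fun w hw => h₂c.mem_ballFinset.2 ((mem_filter.1 hw).2 ▸ hψ w)).trans
      (h₂c.card_ballFinset_le (Φ x) e)
  have hpow := pow_nonneg h₂c.pos.le e
  calc ∑ w ∈ Ω, g (Φinv w) ^ 2 * Γ₂.wV w
      ≤ ∑ w ∈ Ω, Cq * Cc₂ ^ e * (g (Φinv w) ^ 2 * Γ₁.wV (Φinv w)) := sum_le_sum fun w _ => by
        have hw := (h₂c.wV_le_pow_mul_wV (SimpleGraph.dist_comm ▸ hψ w)).trans
          (mul_le_mul_of_nonneg_left (hΦ.weight_upper (Φinv w)) hpow)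
        calc g (Φinv w) ^ 2 * Γ₂.wV w ≤ g (Φinv w) ^ 2 * (Cc₂ ^ e * (Cq * Γ₁.wV (Φinv w))) :=
              mul_le_mul_of_nonneg_left hw (sq_nonneg _)
          _ = _ := by ring
    _ ≤ Cq * Cc₂ ^ e * ((⌈Cc₂⌉₊ + 1) ^ e * ∑ x ∈ Ω.image Φinv ∪ Ω', g x ^ 2 * Γ₁.wV x) := by
        rw [← mul_sum]
        refine mul_le_mul_of_nonneg_left ?_ (mul_nonneg hΦ.Cq_pos.le hpow)
        exact_mod_cast sum_comp_le_mul_sum (fun w hw => mem_union_left _ (mem_image_of_mem _ hw))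
          (fun x _ => mul_nonneg (sq_nonneg _) (Γ₁.wV_pos x).le) hfiber
    _ = _ := by rw [sqnorm_eq_sum fun x hx => mem_union_right _ (hg x hx)]

lemma exists_sqnorm_le (hΦ : IsQI Γ₁ Γ₂ Φ ε a b Cq) (h₂c : Γ₂.Controlled Cc₂)
    (hinv : ∀ z, (Γ₂.G.dist (Φ (Φinv z)) z : ℝ) ≤ ε) :
    ∃ K₁ K₂ : ℝ, 0 < K₁ ∧ 0 ≤ K₂ ∧ ∀ (f : V₂ → ℝ) (Ω : Finset V₂) (Ω' : Finset V₁),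
      (∀ y, f y ≠ 0 → y ∈ Ω) → (∀ x, f (Φ x) ≠ 0 → x ∈ Ω') →
        Γ₂.sqnorm f ≤ K₁ * Γ₁.sqnorm (f ∘ Φ) + K₂ * Γ₂.energy f := by
  set e := ⌈ε⌉₊
  set N : ℝ := (⌈Cc₂⌉₊ + 1) ^ e
  have hψ : ∀ w, Γ₂.G.dist w (Φ (Φinv w)) ≤ e := fun w => by
    rw [SimpleGraph.dist_comm]; exact_mod_cast (hinv w).trans (Nat.le_ceil ε)
  have hCq := hΦ.Cq_pos
  have hCc := h₂c.pos
  refine ⟨2 * (Cq * Cc₂ ^ e * N), 2 * (e * Cc₂ ^ (e + 1) * N * 2), by positivity, by positivity,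
    fun f Ω Ω' hf hf' => ?_⟩
  classical
  -- `f` is compared with its values at the points `Φ (Φinv w)`, which lie in the image of `Φ`
  have hnear := sum_sq_sub_comp_mul_wV_le h₂c hf Ω hψ
  have hfar := hΦ.sum_sq_comp_inv_mul_wV_le h₂c hinv (g := f ∘ Φ) hf' Ω
  have hsplit : Γ₂.sqnorm f ≤ 2 * ∑ w ∈ Ω, (f w - f (Φ (Φinv w))) ^ 2 * Γ₂.wV w +
      2 * ∑ w ∈ Ω, (f ∘ Φ) (Φinv w) ^ 2 * Γ₂.wV w := by
    rw [sqnorm_eq_sum hf, mul_sum, mul_sum, ← sum_add_distrib]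
    exact sum_le_sum fun w _ => by
      simp only [Function.comp_apply]
      nlinarith [Γ₂.wV_pos w, sq_nonneg (f w - 2 * f (Φ (Φinv w)))]
  calc Γ₂.sqnorm f ≤ 2 * (e * Cc₂ ^ (e + 1) * N * (2 * Γ₂.energy f)) +
        2 * (Cq * Cc₂ ^ e * (N * Γ₁.sqnorm (f ∘ Φ))) := by linarith
    _ = _ := by ring

lemma exists_energy_comp_le (hΦ : IsQI Γ₁ Γ₂ Φ ε a b Cq) (h₁c : Γ₁.Controlled Cc₁)
    (h₂c : Γ₂.Controlled Cc₂) :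
    ∃ K > 0, ∀ (f : V₂ → ℝ) (Ω : Finset V₂) (Ω' : Finset V₁),
      (∀ y, f y ≠ 0 → y ∈ Ω) → (∀ x, f (Φ x) ≠ 0 → x ∈ Ω') →
        Γ₁.energy (f ∘ Φ) ≤ K * Γ₂.energy f := by
  classical
  set A := ⌈a⌉₊
  set M : ℕ := (⌈Cc₁⌉₊ + 1) ^ ⌈a * (2 * A + b)⌉₊
  have hA : (0 : ℝ) < A := by exact_mod_cast Nat.ceil_pos.2 hΦ.a_pos
  have hCq := hΦ.Cq_pos
  have hCc := h₂c.pos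
  set L : ℝ := Cq * (A * Cc₂ ^ (A + 1))
  refine ⟨L * M, by positivity, fun f Ω Ω' hf hf' => ?_⟩
  have hedge : ∀ x y, Γ₁.G.Adj x y →
      ((f ∘ Φ) x - (f ∘ Φ) y) ^ 2 * Γ₁.wV x ≤ L * localEnergy h₂c f (Φ x) A := fun x y hxy => by
    have hdist : Γ₂.G.dist (Φ x) (Φ y) ≤ A := by
      have := hΦ.dist_upper x y
      rw [SimpleGraph.dist_eq_one_iff_adj.2 hxy, Nat.cast_one, mul_one] at this
      exact_mod_cast this.trans (Nat.le_ceil a)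
    have hchain := sq_sub_mul_wV_le_localEnergy h₂c hdist f
    have := hΦ.wV_le x
    simp only [Function.comp_apply, L]
    nlinarith [sq_nonneg (f (Φ x) - f (Φ y))]
  have hL : 0 ≤ L := by positivity
  have hloc₀ : ∀ x, 0 ≤ L * localEnergy h₂c f (Φ x) A := fun x =>
    mul_nonneg hL (sum_nonneg fun p _ => mul_nonneg (sq_nonneg _) (Γ₂.wE_nonneg _ _))
  have hmult : ∀ v, #{x ∈ Ω'.biUnion (h₁c.ballFinset · 1) | Γ₂.G.dist (Φ x) v ≤ A} ≤ M :=
    fun v => hΦ.card_le h₁c fun x hx => (mem_filter.1 hx).2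
  have h₁ := two_mul_energy_le_sum (f := f ∘ Φ) h₁c hf' hloc₀ hedge
  rw [← mul_sum] at h₁
  have h₂ := mul_le_mul_of_nonneg_left (sum_localEnergy_le h₂c hf _ Φ A M hmult) hL
  linarith

end IsQI

end WeightedGraph

open WeightedGraph in
theorem faberKrahn_quasi_isometry_general {V₁ V₂ : Type*}
    [Infinite V₂]
    (Γ₁ : WeightedGraph V₁) (Γ₂ : WeightedGraph V₂)
    (Cc₁ Cc₂ : ℝ)
    (h₁c : Γ₁.Controlled Cc₁) (h₂c : Γ₂.Controlled Cc₂)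
    (Φ : V₁ → V₂) (ε a b Cq : ℝ) (hΦ : IsQI Γ₁ Γ₂ Φ ε a b Cq)
    (Φinv : V₂ → V₁) (hinv : ∀ z : V₂, (Γ₂.G.dist (Φ (Φinv z)) z : ℝ) ≤ ε) :
    ∃ c₁ c₂ c₃ : ℝ, 0 < c₁ ∧ 0 < c₂ ∧ 0 < c₃ ∧
      ∀ Λ : V₁ → ℝ → ℝ → ℝ, Γ₁.IsRelFK Λ →
        Γ₂.IsRelFK (fun z r ν => c₁ * Λ (Φinv z) (c₂ * r) (c₃ * ν)) := by
  classical
  obtain ⟨K₁, K₂, hK₁, hK₂, hnorm⟩ := hΦ.exists_sqnorm_le h₂c hinv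
  obtain ⟨K₃, hK₃, henergy⟩ := hΦ.exists_energy_comp_le h₁c h₂c
  obtain ⟨C, hC, hpt, hsum⟩ := hΦ.exists_wV_le h₁c h₂c hinv
  have hK₂' : 0 < K₂ + Cc₂ := by linarith [h₂c.pos]
  have hc₂ : 0 < a * (1 + 2 * ε + b) := mul_pos hΦ.a_pos (by linarith [hΦ.eps_pos, hΦ.b_nonneg])
  refine ⟨min (1 / (4 * (K₂ + Cc₂))) (1 / (2 * K₁ * K₃)), _, C, by positivity, hc₂, hC,
    fun Λ hΛ => ⟨fun z r ν₁ ν₂ h₁ h₂ => ?_, fun z r Ω hΩ hΩr => le_lambda1 hΩ fun f hf hfΩ => ?_⟩⟩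
  · exact mul_le_mul_of_nonneg_left
      (hΛ.1 _ _ _ _ (mul_pos hC h₁) (mul_le_mul_of_nonneg_left h₂ hC.le)) (by positivity)
  obtain ⟨x₀, hx₀⟩ := hΩ
  have huν := (hpt x₀).trans (mul_le_mul_of_nonneg_left
    (single_le_sum (fun y _ => (Γ₂.wV_pos y).le) hx₀) hC.le)
  have hE := Γ₂.energy_nonneg f
  have hcomp := hΛ.mul_le_div_of_comparison h₁c hK₁ hK₂' hK₃ hE
    (sqnorm_pos (Γ := Γ₂) hf hfΩ) (hΦ.inv_mem_ball hinv (hΩr x₀ hx₀)) huν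
  rcases lt_or_ge r 1 with hr | hr
  · -- the ball is `{z}`, so already `‖f‖² ≤ Cc₂ E(f)` and the zero function serves as transplant
    have hz : ∀ y, f y ≠ 0 → y = z := fun y hy => eq_of_mem_ball_of_lt_one (hΩr y (hfΩ y hy)) hr
    refine hcomp 0 ∅ (by simp) (by simp) (by simpa using (Γ₁.wV_pos _).le.trans huν)
      ?_ (by simpa using mul_nonneg hK₃.le hE)
    simpa using (sqnorm_le_mul_energy h₂c hz).trans (by nlinarith)
  · set Ω' := (hΦ.finite_preimage h₁c Ω.finite_toSet).toFinset
    have hmem : ∀ x, x ∈ Ω' ↔ Φ x ∈ Ω := by simp [Ω']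
    have hΩ' : ∀ x, f (Φ x) ≠ 0 → x ∈ Ω' := fun x hx => (hmem x).2 (hfΩ _ hx)
    refine hcomp (f ∘ Φ) Ω' hΩ'
      (fun x hx => hΦ.mem_ball_of_mem_ball hinv hr (hΩr _ ((hmem x).1 hx)))
      (hsum _ _ fun x hx => (hmem x).1 hx) ?_ (henergy f Ω Ω' hfΩ hΩ')
    linarith [hnorm f Ω Ω' hfΩ hΩ', mul_nonneg h₂c.pos.le hE]

open WeightedGraph in
/-- **Lemma (relative Faber-Krahn functions of quasi-isometric graphs).**
If `Φ : Γ₁ → Γ₂` is a quasi-isometry between connected, countably infinite weighted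
graphs with controlled and uniformly lazy weights, and `Φinv` is a quasi-inverse of `Φ`,
then there are constants `c₁, c₂, c₃ > 0` such that whenever `Λ` is a relative
Faber-Krahn function of `Γ₁`, the function
`(z, r, ν) ↦ c₁ * Λ (Φinv z) (c₂ r) (c₃ ν)` is a relative Faber-Krahn function of `Γ₂`. -/
theorem faberKrahn_quasi_isometry {V₁ V₂ : Type*}
    [Countable V₁] [Infinite V₁] [Countable V₂] [Infinite V₂]
    (Γ₁ : WeightedGraph V₁) (Γ₂ : WeightedGraph V₂)
    (Cc₁ Ce₁ Cc₂ Ce₂ : ℝ)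
    (h₁c : Γ₁.Controlled Cc₁) (h₁e : Γ₁.UniformlyLazy Ce₁)
    (h₂c : Γ₂.Controlled Cc₂) (h₂e : Γ₂.UniformlyLazy Ce₂)
    (Φ : V₁ → V₂) (ε a b Cq : ℝ) (hΦ : IsQI Γ₁ Γ₂ Φ ε a b Cq)
    (Φinv : V₂ → V₁) (hinv : ∀ z : V₂, (Γ₂.G.dist (Φ (Φinv z)) z : ℝ) ≤ ε) :
    ∃ c₁ c₂ c₃ : ℝ, 0 < c₁ ∧ 0 < c₂ ∧ 0 < c₃ ∧
      ∀ Λ : V₁ → ℝ → ℝ → ℝ, Γ₁.IsRelFK Λ →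
        Γ₂.IsRelFK (fun z r ν => c₁ * Λ (Φinv z) (c₂ * r) (c₃ * ν)) :=
  faberKrahn_quasi_isometry_general Γ₁ Γ₂ Cc₁ Cc₂ h₁c h₂c Φ ε a b Cq hΦ Φinv hinv
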